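/- arXiv:1907.06233 — 2 statements merged into one kernel-verified Lean document; each statement's English description precedes it below -/
import Mathlib

section
/- Let α > 0 and β ∈ [0,1). Let g : 𝔛 → ℝ have finite sensitivity Δ(g) = sup_{x,x'} |g(x) − g(x')|. If b ≥ Δ(g)/(α − log(1−β)) and ξ has the Laplace(1) distribution (density p(z) = exp(−|z|)/2), then the mechanism Z = g(X) + b·ξ is (α,β)-differentially private: for all x, x' ∈ 𝔛 and all Borel sets A ⊆ ℝ, P(g(x) + bξ ∈ A) ≤ e^α · P(g(x') + bξ ∈ A) + β. -/
/-!
The outputs for the inputs `x` and `x'` are the Laplace law scaled by `b` and centred at `g x`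
and `g x'`. Since `|z| ≤ |z - s| + |s|`, translating the Laplace density by `s` changes it by a
factor at most `exp |s|`, so the two output laws are within a factor
`exp (|g x - g x'| / b) ≤ exp (α - log (1 - β)) = exp α / (1 - β)` of each other. This pure bound
gives the approximate one because probabilities are at most `1`: if the probability `t` of `A`
under `x'` has `exp α * t ≥ 1 - β` the claim is trivial, and otherwise
`exp α * t / (1 - β) ≤ exp α * t + β`.
-/

open MeasureTheory Real
open scoped ENNReal

theorem map_add_right_withDensity {G : Type*} [MeasurableSpace G] [AddGroup G] [MeasurableAdd G]
    (μ : Measure G) [μ.IsAddRightInvariant] (f : G → ℝ≥0∞) (s : G) :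
    (μ.withDensity f).map (· + s) = μ.withDensity fun w => f (w - s) := by
  ext A hA
  rw [Measure.map_apply (measurable_add_const s) hA, withDensity_apply _ (measurable_add_const s hA),
    withDensity_apply _ hA, ← (measurePreserving_add_right μ s).setLIntegral_comp_preimage_emb
      (measurableEmbedding_addRight s) (fun w => f (w - s)) A]
  simp only [add_sub_cancel_right]

theorem le_mul_add_of_le_mul_div_one_sub {a β : ℝ} {p t : ℝ≥0∞} (ha : 0 ≤ a) (hβ0 : 0 ≤ β)
    (hβ1 : β < 1) (hp : p ≤ 1) (ht : t ≠ ∞) (hpt : p ≤ ENNReal.ofReal (a / (1 - β)) * t) :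
    p ≤ ENNReal.ofReal a * t + ENNReal.ofReal β := by
  have hp' : p ≠ ∞ := ne_top_of_le_ne_top ENNReal.one_ne_top hp
  rw [← ENNReal.ofReal_toReal ht, ← ENNReal.ofReal_mul (by positivity)] at hpt ⊢
  rw [← ENNReal.ofReal_add (by positivity) hβ0, ← ENNReal.ofReal_toReal hp',
    ENNReal.ofReal_le_ofReal_iff (by positivity)]
  rw [← ENNReal.ofReal_toReal hp', ENNReal.ofReal_le_ofReal_iff (by positivity)] at hpt
  have hp1 : p.toReal ≤ 1 := by simpa using ENNReal.toReal_mono ENNReal.one_ne_top hp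
  rcases le_or_gt (1 - β) (a * t.toReal) with hlarge | hsmall
  · linarith
  · calc p.toReal ≤ a / (1 - β) * t.toReal := hpt
      _ = a * t.toReal / (1 - β) := by ring
      _ ≤ a * t.toReal + β := by
        rw [div_le_iff₀ (by linarith)]
        nlinarith

noncomputable def laplaceMeasure : Measure ℝ :=
  volume.withDensity fun z => ENNReal.ofReal (exp (-|z|) / 2)

theorem integral_exp_neg_abs_div_two : ∫ z : ℝ, exp (-|z|) / 2 = 1 := by
  rw [integral_div, integral_comp_abs (f := fun x => exp (-x)), integral_exp_neg_Ioi_zero]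
  norm_num

instance : IsProbabilityMeasure laplaceMeasure := by
  constructor
  rw [laplaceMeasure, withDensity_apply _ MeasurableSet.univ, Measure.restrict_univ,
    ← ofReal_integral_eq_lintegral_ofReal
      (.of_integral_ne_zero (by simp [integral_exp_neg_abs_div_two]))
      (ae_of_all _ fun z => by positivity),
    integral_exp_neg_abs_div_two, ENNReal.ofReal_one]

theorem laplaceMeasure_map_add_le (s : ℝ) :
    laplaceMeasure.map (· + s) ≤ ENNReal.ofReal (exp |s|) • laplaceMeasure := by
  rw [laplaceMeasure, map_add_right_withDensity, ← withDensity_smul' _ _ ENNReal.ofReal_ne_top]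
  refine withDensity_mono (ae_of_all _ fun w => ?_)
  simp only [Pi.smul_apply, smul_eq_mul, ← ENNReal.ofReal_mul (exp_pos _).le]
  gcongr
  rw [← mul_div_assoc, ← exp_add]
  gcongr
  linarith [abs_sub_abs_le_abs_sub w s]

theorem laplaceMeasure_map_affine_le {c c' b K : ℝ} (hb : 0 ≤ b) (hK : 0 ≤ K)
    (hc : |c - c'| ≤ K * b) :
    laplaceMeasure.map (fun z => c + b * z)
      ≤ ENNReal.ofReal (exp K) • laplaceMeasure.map (fun z => c' + b * z) := by
  rcases hb.eq_or_lt with rfl | hb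
  · obtain rfl : c = c' := by
      rw [mul_zero, abs_nonpos_iff, sub_eq_zero] at hc
      exact hc
    calc laplaceMeasure.map (fun z => c + 0 * z)
        = (1 : ℝ≥0∞) • laplaceMeasure.map (fun z => c + 0 * z) := (one_smul _ _).symm
      _ ≤ ENNReal.ofReal (exp K) • laplaceMeasure.map (fun z => c + 0 * z) := by
        gcongr
        exact ENNReal.one_le_ofReal.mpr (one_le_exp hK)
  · set s := (c - c') / b
    have hs : |s| ≤ K := by
      rwa [abs_div, abs_of_pos hb, div_le_iff₀ hb]
    have hmeas : Measurable fun z => c' + b * z := by fun_prop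
    have hcomp : (fun z => c + b * z) = (fun z => c' + b * z) ∘ (· + s) := by
      ext z
      simp only [Function.comp, s]
      field_simp
      ring
    rw [hcomp, ← Measure.map_map hmeas (measurable_add_const s)]
    calc (laplaceMeasure.map (· + s)).map (fun z => c' + b * z)
        ≤ (ENNReal.ofReal (exp |s|) • laplaceMeasure).map (fun z => c' + b * z) :=
          Measure.map_mono (laplaceMeasure_map_add_le s) hmeas
      _ = ENNReal.ofReal (exp |s|) • laplaceMeasure.map (fun z => c' + b * z) :=
          Measure.map_smul _ _ _
      _ ≤ ENNReal.ofReal (exp K) • laplaceMeasure.map (fun z => c' + b * z) := by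
          gcongr

/-- Laplace mechanism gives (α,β)-differential privacy. -/
theorem laplace_mechanism_approx_dp {𝔛 : Type*} (g : 𝔛 → ℝ) (Δ α β b : ℝ)
    (hα : 0 < α) (hβ0 : 0 ≤ β) (hβ1 : β < 1)
    (hΔ : ∀ x x' : 𝔛, |g x - g x'| ≤ Δ)
    (hb : b ≥ Δ / (α - Real.log (1 - β))) :
    ∀ (x x' : 𝔛) (A : Set ℝ), MeasurableSet A →
      (Measure.map (fun z => g x + b * z)
          (volume.withDensity fun z => ENNReal.ofReal (Real.exp (-|z|) / 2))) A
        ≤ ENNReal.ofReal (Real.exp α) *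
            (Measure.map (fun z => g x' + b * z)
              (volume.withDensity fun z => ENNReal.ofReal (Real.exp (-|z|) / 2))) A
          + ENNReal.ofReal β := by
  intro x x' A _
  change (laplaceMeasure.map _) A ≤ _ * (laplaceMeasure.map _) A + _
  have hK : 0 < α - log (1 - β) := by
    linarith [log_nonpos (by linarith) (by linarith : 1 - β ≤ 1)]
  have hb0 : 0 ≤ b := (div_nonneg ((abs_nonneg _).trans (hΔ x x)) hK.le).trans hb
  have hgap : |g x - g x'| ≤ (α - log (1 - β)) * b :=
    (hΔ x x').trans ((div_le_iff₀' hK).mp hb)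
  have hprob (c : ℝ) : IsProbabilityMeasure (laplaceMeasure.map fun z => c + b * z) :=
    Measure.isProbabilityMeasure_map (by fun_prop)
  have hexp : exp α / (1 - β) = exp (α - log (1 - β)) := by
    rw [exp_sub, exp_log (by linarith)]
  have := hprob (g x)
  have := hprob (g x')
  refine le_mul_add_of_le_mul_div_one_sub (exp_pos α).le hβ0 hβ1 prob_le_one
    (measure_ne_top _ A) ?_
  rw [hexp]
  exact laplaceMeasure_map_affine_le hb0 hK.le hgap A
end

section
/- Let P₀^n and P₁^n be the n-fold products of the output distributions of a non-interactive (α,0)-locally differentially private mechanism applied to i.i.d. samples from densities f₀ and f₁ respectively. Then KL(P₀^n, P₁^n) ≤ 4n(e^α − 1)² · TV²(P_{f₀}, P_{f₁}), where TV denotes total variation distance between the laws of a single raw observation. -/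
open MeasureTheory ProbabilityTheory
open Function Set

lemma lintegral_pi_prod {n : ℕ} {Z : Type*} [MeasurableSpace Z]
    (μ : Measure Z) [SigmaFinite μ]
    (h : Fin n → Z → ENNReal) (hm : ∀ i, Measurable (h i)) :
    ∫⁻ z : Fin n → Z, ∏ i, h i (z i) ∂(Measure.pi fun _ => μ)
      = ∏ i, ∫⁻ x, h i x ∂μ := by
  induction n with
  | zero => simp [Measure.pi_of_empty (β := fun _ : Fin 0 => Z)]
  | succ n ih =>
    have hmp := (measurePreserving_piFinSuccAbove (fun _ : Fin (n+1) => μ) 0).symm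
    have hF : Measurable fun z : Fin (n+1) → Z => ∏ i, h i (z i) :=
      Finset.measurable_prod _ fun i _ => (hm i).comp (measurable_pi_apply i)
    rw [← hmp.lintegral_comp hF]
    simp_rw [MeasurableEquiv.piFinSuccAbove_symm_apply, Fin.insertNthEquiv,
      Fin.prod_univ_succ, Fin.insertNth_zero, Equiv.coe_fn_mk]
    simp only [Fin.zero_succAbove, Fin.cons_zero, Fin.cons_succ, cast_eq]
    have hprod := lintegral_prod_mul (μ := μ) (ν := Measure.pi fun _ : Fin n => μ)
      (f := h 0) (g := fun y : Fin n → Z => ∏ j, h (Fin.succ j) (y j))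
      (hm 0).aemeasurable
      (Finset.measurable_prod _ fun i _ => (hm _).comp (measurable_pi_apply i)).aemeasurable
    rw [hprod, ih (fun j => h (Fin.succ j)) (fun j => hm _)]

lemma pi_withDensity {n : ℕ} {Z : Type*} [MeasurableSpace Z]
    (ν : Measure Z) [SigmaFinite ν] (g : Z → ENNReal) (hg : Measurable g)
    [SigmaFinite (ν.withDensity g)] :
    Measure.pi (fun _ : Fin n => ν.withDensity g)
      = (Measure.pi fun _ : Fin n => ν).withDensity (fun z => ∏ i, g (z i)) := by
  refine Measure.pi_eq fun s hs => ?_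
  rw [withDensity_apply _ (MeasurableSet.univ_pi hs)]
  have hind : ∀ z : Fin n → Z,
      (Set.univ.pi s).indicator (fun z : Fin n → Z => ∏ i, g (z i)) z
        = ∏ i, (s i).indicator g (z i) := by
    intro z
    by_cases hz : z ∈ Set.univ.pi s
    · rw [Set.indicator_of_mem hz]
      exact Finset.prod_congr rfl fun i _ =>
        (Set.indicator_of_mem (hz i (Set.mem_univ i)) g).symm
    · rw [Set.indicator_of_notMem hz]
      obtain ⟨i, hi⟩ : ∃ i, z i ∉ s i := by simpa [Set.mem_pi] using hz
      exact (Finset.prod_eq_zero (Finset.mem_univ i)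
        (by rw [Set.indicator_of_notMem hi])).symm
  rw [← lintegral_indicator (MeasurableSet.univ_pi hs) _]
  simp_rw [hind]
  rw [lintegral_pi_prod ν _ (fun i => hg.indicator (hs i))]
  exact Finset.prod_congr rfl fun i _ => by
    rw [lintegral_indicator (hs i) _, withDensity_apply _ (hs i)]

lemma map_eval_pi {n : ℕ} {Z : Type*} [MeasurableSpace Z]
    (μ : Measure Z) [IsProbabilityMeasure μ] (i : Fin n) :
    (Measure.pi fun _ : Fin n => μ).map (Function.eval i) = μ := by
  ext A hA
  rw [Measure.map_apply (measurable_pi_apply i) hA, ← Set.univ_pi_update_univ,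
    Measure.pi_pi]
  rw [Finset.prod_eq_single i (fun j _ hj => by simp [Function.update_of_ne hj])
    (fun h => absurd (Finset.mem_univ i) h)]
  simp

lemma abs_cont_of_le_smul {Z : Type*} [MeasurableSpace Z] {M₀ M₁ : Measure Z} {a : ℝ}
    (h01 : M₀ ≤ (ENNReal.ofReal a) • M₁) : M₀ ≪ M₁ := by
  intro A hA
  have := h01 A
  simp only [Measure.smul_apply, smul_eq_mul, hA, mul_zero] at this
  exact le_antisymm this (zero_le)

lemma rnDeriv_mem_Icc {Z : Type*} [MeasurableSpace Z] (M₀ M₁ : Measure Z)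
    [IsProbabilityMeasure M₀] [IsProbabilityMeasure M₁] (a : ℝ) (ha : 1 ≤ a)
    (h01 : M₀ ≤ (ENNReal.ofReal a) • M₁) (h10 : M₁ ≤ (ENNReal.ofReal a) • M₀) :
    ∀ᵐ z ∂M₁, ((M₀.rnDeriv M₁ z).toReal) ∈ Set.Icc a⁻¹ a := by
  have ha0 : 0 < a := lt_of_lt_of_le one_pos ha
  set t : Z → ℝ := fun z => ((M₀.rnDeriv M₁ z).toReal) with ht
  have hac : M₀ ≪ M₁ := abs_cont_of_le_smul h01
  have h_toReal : ∀ (P R : Measure Z) (A : Set Z), R A ≠ ⊤ →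
      P A ≤ ENNReal.ofReal a • R A → (P A).toReal ≤ a * (R A).toReal := by
    intro P R A hRA h
    have hfin : ENNReal.ofReal a * R A ≠ ⊤ := ENNReal.mul_ne_top ENNReal.ofReal_ne_top hRA
    have := ENNReal.toReal_mono hfin h
    rwa [ENNReal.toReal_mul, ENNReal.toReal_ofReal ha0.le] at this
  have hInt : Integrable t M₁ := Measure.integrable_toReal_rnDeriv
  have h_upper : ∀ᵐ z ∂M₁, t z ≤ a := by
    have hint' : Integrable (fun z => a - t z) M₁ := (integrable_const a).sub hInt
    have h := ae_nonneg_of_forall_setIntegral_nonneg hint' ?_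
    · filter_upwards [h] with z hz; simp only [Pi.zero_apply] at hz; linarith
    · intro A hA _
      rw [integral_sub (integrableOn_const (C := a) (measure_ne_top _ _)) hInt.integrableOn,
        setIntegral_const, Measure.setIntegral_toReal_rnDeriv hac A]
      have := h_toReal M₀ M₁ A (measure_ne_top _ _) (h01 A)
      simp only [smul_eq_mul, Measure.real]
      nlinarith [ENNReal.toReal_nonneg (a := M₁ A)]
  have h_lower : ∀ᵐ z ∂M₁, a⁻¹ ≤ t z := by
    have hint' : Integrable (fun z => t z - a⁻¹) M₁ := hInt.sub (integrable_const a⁻¹)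
    have h := ae_nonneg_of_forall_setIntegral_nonneg hint' ?_
    · filter_upwards [h] with z hz; simp only [Pi.zero_apply] at hz; linarith
    · intro A hA _
      rw [integral_sub hInt.integrableOn (integrableOn_const (C := a⁻¹) (measure_ne_top _ _)),
        setIntegral_const, Measure.setIntegral_toReal_rnDeriv hac A]
      have h2 := h_toReal M₁ M₀ A (measure_ne_top _ _) (h10 A)
      have haa : a * a⁻¹ = 1 := mul_inv_cancel₀ ha0.ne'
      simp only [smul_eq_mul, Measure.real]
      nlinarith [ENNReal.toReal_nonneg (a := M₀ A), inv_pos.mpr ha0]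
  filter_upwards [h_upper, h_lower] with z h1 h2
  exact ⟨h2, h1⟩

lemma kl_single_bound {Z : Type*} [MeasurableSpace Z] (M₀ M₁ : Measure Z)
    [IsProbabilityMeasure M₀] [IsProbabilityMeasure M₁] (a ε : ℝ) (ha : 1 ≤ a) (hε : 0 ≤ ε)
    (h01 : M₀ ≤ (ENNReal.ofReal a) • M₁) (h10 : M₁ ≤ (ENNReal.ofReal a) • M₀)
    (hdist : ∀ A : Set Z, MeasurableSet A →
      |(M₀ A).toReal - (M₁ A).toReal| ≤ ε * (M₁ A).toReal) :
    ∫ z, Real.log ((M₀.rnDeriv M₁ z).toReal) ∂M₀ ≤ ε ^ 2 := by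
  have ha0 : 0 < a := lt_of_lt_of_le one_pos ha
  set t : Z → ℝ := fun z => ((M₀.rnDeriv M₁ z).toReal) with ht
  have hac : M₀ ≪ M₁ := abs_cont_of_le_smul h01
  have hInt : Integrable t M₁ := Measure.integrable_toReal_rnDeriv
  have hmt : Measurable t := (Measure.measurable_rnDeriv _ _).ennreal_toReal
  -- a.e. bounds
  have hIcc := rnDeriv_mem_Icc M₀ M₁ a ha h01 h10
  have h_upper : ∀ᵐ z ∂M₁, t z ≤ a := by filter_upwards [hIcc] with z hz; exact hz.2
  have h_lower : ∀ᵐ z ∂M₁, a⁻¹ ≤ t z := by filter_upwards [hIcc] with z hz; exact hz.1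
  have h_close : ∀ᵐ z ∂M₁, |t z - 1| ≤ ε := by
    have h1 : ∀ᵐ z ∂M₁, 0 ≤ ε + 1 - t z := by
      have hint' : Integrable (fun z => ε + 1 - t z) M₁ := (integrable_const (ε + 1)).sub hInt
      apply ae_nonneg_of_forall_setIntegral_nonneg hint'
      intro A hA _
      rw [integral_sub (integrableOn_const (C := ε + 1) (measure_ne_top _ _)) hInt.integrableOn,
        setIntegral_const, Measure.setIntegral_toReal_rnDeriv hac A]
      have := abs_le.mp (hdist A hA)
      simp only [smul_eq_mul, Measure.real]
      nlinarith [ENNReal.toReal_nonneg (a := M₁ A)]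
    have h2 : ∀ᵐ z ∂M₁, 0 ≤ t z - (1 - ε) := by
      have hint' : Integrable (fun z => t z - (1 - ε)) M₁ := hInt.sub (integrable_const (1 - ε))
      apply ae_nonneg_of_forall_setIntegral_nonneg hint'
      intro A hA _
      rw [integral_sub hInt.integrableOn (integrableOn_const (C := 1 - ε) (measure_ne_top _ _)),
        setIntegral_const, Measure.setIntegral_toReal_rnDeriv hac A]
      have := abs_le.mp (hdist A hA)
      simp only [smul_eq_mul, Measure.real]
      nlinarith [ENNReal.toReal_nonneg (a := M₁ A)]
    filter_upwards [h1, h2] with z hz1 hz2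
    rw [abs_le]; constructor <;> linarith
  -- rewrite the integral wrt M₀ as integral wrt M₁
  have hkl : ∫ z, Real.log (t z) ∂M₀ = ∫ z, t z * Real.log (t z) ∂M₁ := by
    rw [← integral_rnDeriv_smul hac (f := fun z => Real.log (t z))]
    simp [ht, smul_eq_mul]
  -- integrability of the various quantities wrt M₁
  have hC : ∀ᵐ z ∂M₁, t z ∈ Set.Icc a⁻¹ a := by
    filter_upwards [h_upper, h_lower] with z h1 h2; exact ⟨h2, h1⟩
  have hlog_bound : ∀ z, t z ∈ Set.Icc a⁻¹ a → |Real.log (t z)| ≤ |Real.log a| := by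
    intro z hz
    have h1 : Real.log (t z) ≤ Real.log a := Real.log_le_log (lt_of_lt_of_le (by positivity) hz.1) hz.2
    have h2 : Real.log a⁻¹ ≤ Real.log (t z) := Real.log_le_log (by positivity) hz.1
    rw [Real.log_inv] at h2
    have h3 : 0 ≤ Real.log a := Real.log_nonneg ha
    rw [abs_le, abs_of_nonneg h3]; exact ⟨by linarith, h1⟩
  have hIntlog : Integrable (fun z => t z * Real.log (t z)) M₁ := by
    apply Integrable.mono' (integrable_const (a * |Real.log a|))
      ((hmt.mul (Real.measurable_log.comp hmt) :
        Measurable fun z => t z * Real.log (t z)).aestronglyMeasurable)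
    filter_upwards [hC] with z hz
    rw [Real.norm_eq_abs, Pi.mul_apply, abs_mul]
    have h0 : 0 ≤ t z := le_trans (by positivity) hz.1
    rw [abs_of_nonneg h0]
    exact mul_le_mul hz.2 (hlog_bound z hz) (abs_nonneg _) ha0.le
  have hIntsq : Integrable (fun z => (t z - 1) ^ 2) M₁ := by
    apply Integrable.mono' (integrable_const ((a + 1) ^ 2))
      (((hmt.sub measurable_const).pow_const 2).aestronglyMeasurable)
    filter_upwards [hC] with z hz
    have h0 : 0 ≤ t z := le_trans (by positivity) hz.1
    rw [Real.norm_eq_abs, Pi.sub_apply, abs_of_nonneg (by positivity)]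
    nlinarith [hz.2]
  have hIntsub : Integrable (fun z => t z - 1) M₁ := hInt.sub (integrable_const 1)
  -- the pointwise bound  t log t ≤ (t-1)^2 + (t-1)
  have h_ptwise : ∀ᵐ z ∂M₁, t z * Real.log (t z) ≤ (t z - 1) ^ 2 + (t z - 1) := by
    filter_upwards [h_lower] with z hz
    have h0 : 0 < t z := lt_of_lt_of_le (by positivity) hz
    have := Real.log_le_sub_one_of_pos h0
    nlinarith
  have hone : ∫ z, t z - 1 ∂M₁ = 0 := by
    rw [integral_sub hInt (integrable_const 1), Measure.integral_toReal_rnDeriv hac]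
    simp
  calc ∫ z, Real.log (t z) ∂M₀ = ∫ z, t z * Real.log (t z) ∂M₁ := hkl
    _ ≤ ∫ z, (t z - 1) ^ 2 + (t z - 1) ∂M₁ :=
        integral_mono_ae hIntlog (hIntsq.add hIntsub) h_ptwise
    _ = ∫ z, (t z - 1) ^ 2 ∂M₁ := by rw [integral_add hIntsq hIntsub, hone, add_zero]
    _ ≤ ∫ _z, ε ^ 2 ∂M₁ := by
        apply integral_mono_ae hIntsq (integrable_const _)
        filter_upwards [h_close] with z hz
        calc (t z - 1) ^ 2 = |t z - 1| ^ 2 := (sq_abs _).symm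
          _ ≤ ε ^ 2 := by nlinarith [abs_nonneg (t z - 1)]
    _ = ε ^ 2 := by simp

/-- Kullback–Leibler divergence `∫ log(dP/dQ) dP`. -/
noncomputable def klDiv' {Z : Type*} [MeasurableSpace Z] (P Q : Measure Z) : ℝ :=
  ∫ z, Real.log ((P.rnDeriv Q z).toReal) ∂P

lemma klDiv'_pi {n : ℕ} {Z : Type*} [MeasurableSpace Z] (M₀ M₁ : Measure Z)
    [IsProbabilityMeasure M₀] [IsProbabilityMeasure M₁] (hac : M₀ ≪ M₁)
    (lo hi : ℝ) (hlo : 0 < lo)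
    (hae : ∀ᵐ x ∂M₀, (M₀.rnDeriv M₁ x).toReal ∈ Set.Icc lo hi) :
    klDiv' (Measure.pi fun _ : Fin n => M₀) (Measure.pi fun _ : Fin n => M₁)
      = n * klDiv' M₀ M₁ := by
  set g := M₀.rnDeriv M₁ with hg
  have hmg : Measurable g := Measure.measurable_rnDeriv _ _
  have hwd : M₁.withDensity g = M₀ := Measure.withDensity_rnDeriv_eq _ _ hac
  set G : (Fin n → Z) → ENNReal := fun z => ∏ i, g (z i) with hG
  have hmG : Measurable G :=
    Finset.measurable_prod _ fun i _ => hmg.comp (measurable_pi_apply i)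
  have hpi : (Measure.pi fun _ : Fin n => M₀)
      = (Measure.pi fun _ : Fin n => M₁).withDensity G := by
    conv_lhs => rw [show (fun _ : Fin n => M₀) = fun _ : Fin n => M₁.withDensity g from
      funext fun _ => hwd.symm]
    exact pi_withDensity M₁ g hmg
  have hacpi : (Measure.pi fun _ : Fin n => M₀) ≪ (Measure.pi fun _ : Fin n => M₁) := by
    rw [hpi]; exact withDensity_absolutelyContinuous _ _
  have hrn : (Measure.pi fun _ : Fin n => M₀).rnDeriv (Measure.pi fun _ : Fin n => M₁)
      =ᵐ[Measure.pi fun _ : Fin n => M₁] G := by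
    rw [hpi]; exact Measure.rnDeriv_withDensity _ hmG
  have hrn₀ : (Measure.pi fun _ : Fin n => M₀).rnDeriv (Measure.pi fun _ : Fin n => M₁)
      =ᵐ[Measure.pi fun _ : Fin n => M₀] G := hacpi.ae_le hrn
  -- coordinatewise a.e. bounds
  have hae_coord : ∀ᵐ z ∂(Measure.pi fun _ : Fin n => M₀), ∀ i, (g (z i)).toReal ∈ Set.Icc lo hi := by
    rw [ae_all_iff]
    intro i
    have hS : (Measure.pi fun _ : Fin n => M₀) (Function.eval i ⁻¹' {x | ¬ (g x).toReal ∈ Set.Icc lo hi}) = 0 :=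
      Measure.pi_eval_preimage_null _ (by rw [← ae_iff]; exact hae)
    rw [ae_iff]
    exact measure_mono_null (fun z hz => hz) hS
  -- rewrite klDiv' as an integral of a sum
  have h1 : klDiv' (Measure.pi fun _ : Fin n => M₀) (Measure.pi fun _ : Fin n => M₁)
      = ∫ z, ∑ i, Real.log ((g (z i)).toReal) ∂(Measure.pi fun _ : Fin n => M₀) := by
    refine integral_congr_ae ?_
    filter_upwards [hrn₀, hae_coord] with z hz hcoord
    rw [hz, hG]
    rw [ENNReal.toReal_prod, Real.log_prod]
    intro i _
    exact ne_of_gt (lt_of_lt_of_le hlo (hcoord i).1)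
  rw [h1]
  have hint_i : ∀ i : Fin n, Integrable
      (fun z : Fin n → Z => Real.log ((g (z i)).toReal)) (Measure.pi fun _ : Fin n => M₀) := by
    intro i
    apply Integrable.mono' (integrable_const (|Real.log lo| + |Real.log hi|))
      ((Real.measurable_log.comp ((hmg.comp (measurable_pi_apply i)).ennreal_toReal) :
        Measurable fun z : Fin n → Z => Real.log ((g (z i)).toReal)).aestronglyMeasurable)
    filter_upwards [hae_coord] with z hz
    have h := hz i
    have hpos : 0 < (g (z i)).toReal := lt_of_lt_of_le hlo h.1
    have h1' : Real.log lo ≤ Real.log ((g (z i)).toReal) := Real.log_le_log hlo h.1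
    have h2' : Real.log ((g (z i)).toReal) ≤ Real.log hi := Real.log_le_log hpos h.2
    rw [Real.norm_eq_abs, abs_le]
    constructor
    · calc -(|Real.log lo| + |Real.log hi|) ≤ -|Real.log lo| := by
            simp [abs_nonneg]
        _ ≤ Real.log lo := neg_abs_le _
        _ ≤ _ := h1'
    · calc Real.log ((g (z i)).toReal) ≤ Real.log hi := h2'
        _ ≤ |Real.log hi| := le_abs_self _
        _ ≤ |Real.log lo| + |Real.log hi| := by simp [abs_nonneg]
  rw [integral_finset_sum _ fun i _ => hint_i i]
  have h2 : ∀ i : Fin n, ∫ z, Real.log ((g (z i)).toReal) ∂(Measure.pi fun _ : Fin n => M₀)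
      = klDiv' M₀ M₁ := by
    intro i
    have hmap := map_eval_pi (n := n) M₀ i
    have hsm : AEStronglyMeasurable (fun x => Real.log ((g x).toReal))
        (Measure.map (eval i) (Measure.pi fun _ : Fin n => M₀)) :=
      (Real.measurable_log.comp (hmg.ennreal_toReal)).aestronglyMeasurable
    have heq : ∫ x, Real.log ((g x).toReal)
          ∂(Measure.map (eval i) (Measure.pi fun _ : Fin n => M₀))
        = ∫ z : Fin n → Z, Real.log ((g (z i)).toReal) ∂(Measure.pi fun _ : Fin n => M₀) :=
      integral_map (measurable_pi_apply i).aemeasurable hsm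
    rw [← heq, hmap]
    rfl
  simp_rw [h2]
  simp [Finset.sum_const]

/-- Data-processing type bound for non-interactive α-locally differentially private
channels (inequality (14) of Duchi–Jordan–Wainwright):
`KL(P₀ⁿ, P₁ⁿ) ≤ 4 n (e^α - 1)² (∫|f₀ - f₁|)²`. -/
theorem kl_bound_local_dp {Z : Type*} [MeasurableSpace Z] (n : ℕ) (α : ℝ) (hα : 0 < α)
    (Q : ProbabilityTheory.Kernel ℝ Z) [IsMarkovKernel Q]
    (hDP : ∀ (x x' : ℝ) (A : Set Z), MeasurableSet A →
      Q x A ≤ ENNReal.ofReal (Real.exp α) * Q x' A)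
    (f₀ f₁ : ℝ → ℝ)
    (h₀_nonneg : ∀ x, 0 ≤ f₀ x) (h₁_nonneg : ∀ x, 0 ≤ f₁ x)
    (h₀_int : Integrable f₀) (h₁_int : Integrable f₁)
    (h₀_dens : ∫ x : ℝ, f₀ x = 1) (h₁_dens : ∫ x : ℝ, f₁ x = 1) :
    klDiv'
        (Measure.pi fun _ : Fin n =>
          ((volume.withDensity fun x => ENNReal.ofReal (f₀ x)).bind fun x => Q x))
        (Measure.pi fun _ : Fin n =>
          ((volume.withDensity fun x => ENNReal.ofReal (f₁ x)).bind fun x => Q x))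
      ≤ 4 * n * (Real.exp α - 1) ^ 2 * (∫ x : ℝ, |f₀ x - f₁ x|) ^ 2 := by
  set a := Real.exp α with ha_def
  have ha : 1 ≤ a := by
    rw [ha_def, ← Real.exp_zero]
    exact Real.exp_le_exp.mpr hα.le
  have ha0 : 0 < a := lt_of_lt_of_le one_pos ha
  set T := ∫ x : ℝ, |f₀ x - f₁ x| with hT_def
  have hT0 : 0 ≤ T := integral_nonneg fun x => abs_nonneg _
  set μ₀ := volume.withDensity fun x => ENNReal.ofReal (f₀ x) with hμ₀
  set μ₁ := volume.withDensity fun x => ENNReal.ofReal (f₁ x) with hμ₁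
  set M₀ := μ₀.bind fun x => Q x with hM₀
  set M₁ := μ₁.bind fun x => Q x with hM₁
  -- probability instances
  have hprob : ∀ (f : ℝ → ℝ), (∀ x, 0 ≤ f x) → Integrable f → (∫ x : ℝ, f x) = 1 →
      IsProbabilityMeasure (volume.withDensity fun x => ENNReal.ofReal (f x)) := by
    intro f hf hfi hfd
    constructor
    rw [withDensity_apply _ MeasurableSet.univ, setLIntegral_univ,
      ← ofReal_integral_eq_lintegral_ofReal hfi (Filter.Eventually.of_forall hf), hfd,
      ENNReal.ofReal_one]
  haveI hpμ₀ : IsProbabilityMeasure μ₀ := hprob f₀ h₀_nonneg h₀_int h₀_dens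
  haveI hpμ₁ : IsProbabilityMeasure μ₁ := hprob f₁ h₁_nonneg h₁_int h₁_dens
  have hprobM : ∀ (μ : Measure ℝ), IsProbabilityMeasure μ →
      IsProbabilityMeasure (μ.bind fun x => Q x) := by
    intro μ hμ
    constructor
    rw [Measure.bind_apply MeasurableSet.univ Q.measurable.aemeasurable]
    simp
  haveI hpM₀ : IsProbabilityMeasure M₀ := hprobM μ₀ hpμ₀
  haveI hpM₁ : IsProbabilityMeasure M₁ := hprobM μ₁ hpμ₁
  -- mixing bounds
  have hmix : ∀ (μ : Measure ℝ), IsProbabilityMeasure μ → ∀ (x : ℝ) (A : Set Z),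
      MeasurableSet A → Q x A ≤ ENNReal.ofReal a * (μ.bind fun y => Q y) A ∧
        (μ.bind fun y => Q y) A ≤ ENNReal.ofReal a * Q x A := by
    intro μ hμ x A hA
    rw [Measure.bind_apply hA Q.measurable.aemeasurable]
    constructor
    · have h1 : Q x A = ∫⁻ _x', Q x A ∂μ := by rw [lintegral_const, measure_univ, mul_one]
      rw [h1, ← lintegral_const_mul _ (Q.measurable_coe hA)]
      exact lintegral_mono fun x' => hDP x x' A hA
    · calc ∫⁻ x', Q x' A ∂μ ≤ ∫⁻ _x', ENNReal.ofReal a * Q x A ∂μ :=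
          lintegral_mono fun x' => hDP x' x A hA
        _ = ENNReal.ofReal a * Q x A := by rw [lintegral_const, measure_univ, mul_one]
  have hbind_le : ∀ (μ ν : Measure ℝ), IsProbabilityMeasure μ → IsProbabilityMeasure ν →
      (μ.bind fun x => Q x) ≤ ENNReal.ofReal a • (ν.bind fun x => Q x) := by
    intro μ ν hμ hν
    rw [Measure.le_iff]
    intro A hA
    rw [Measure.smul_apply, smul_eq_mul, Measure.bind_apply hA Q.measurable.aemeasurable]
    calc ∫⁻ x, Q x A ∂μ
        ≤ ∫⁻ _x, ENNReal.ofReal a * (ν.bind fun y => Q y) A ∂μ :=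
          lintegral_mono fun x => (hmix ν hν x A hA).1
      _ = ENNReal.ofReal a * (ν.bind fun y => Q y) A := by
          rw [lintegral_const, measure_univ, mul_one]
  have h01 : M₀ ≤ ENNReal.ofReal a • M₁ := hbind_le μ₀ μ₁ hpμ₀ hpμ₁
  have h10 : M₁ ≤ ENNReal.ofReal a • M₀ := hbind_le μ₁ μ₀ hpμ₁ hpμ₀
  have hac : M₀ ≪ M₁ := abs_cont_of_le_smul h01
  -- representation of measures of sets as real integrals
  have hrep : ∀ (f : ℝ → ℝ), (∀ x, 0 ≤ f x) → Integrable f → ∀ A : Set Z, MeasurableSet A →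
      (((volume.withDensity fun x => ENNReal.ofReal (f x)).bind fun x => Q x) A).toReal
        = ∫ x : ℝ, f x * (Q x A).toReal := by
    intro f hf hfi A hA
    have hfm : AEMeasurable (fun x => ENNReal.ofReal (f x)) volume :=
      ENNReal.measurable_ofReal.comp_aemeasurable hfi.aemeasurable
    rw [Measure.bind_apply hA Q.measurable.aemeasurable,
      lintegral_withDensity_eq_lintegral_mul₀ hfm (Q.measurable_coe hA).aemeasurable]
    have hfin : ∀ᵐ x : ℝ, ((fun x => ENNReal.ofReal (f x)) * fun x => Q x A) x < ⊤ := by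
      filter_upwards with x
      exact ENNReal.mul_lt_top ENNReal.ofReal_lt_top (measure_lt_top _ _)
    have ham : AEMeasurable ((fun x => ENNReal.ofReal (f x)) * fun x => Q x A) volume :=
      (ENNReal.measurable_ofReal.comp_aemeasurable hfi.aemeasurable).mul
        (Q.measurable_coe hA).aemeasurable
    rw [← integral_toReal ham hfin]
    congr 1
    funext x
    simp [ENNReal.toReal_mul, ENNReal.toReal_ofReal (hf x)]
  -- the TV-type bound on the measures of sets
  have hdist : ∀ A : Set Z, MeasurableSet A →
      |(M₀ A).toReal - (M₁ A).toReal| ≤ ((a - 1) * T) * (M₁ A).toReal := by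
    intro A hA
    set q : ℝ → ℝ := fun x => (Q x A).toReal with hq_def
    have hmq : Measurable q := (Q.measurable_coe hA).ennreal_toReal
    have hq0 : ∀ x, 0 ≤ q x := fun x => ENNReal.toReal_nonneg
    have hq1 : ∀ x, q x ≤ 1 := by
      intro x
      have h := prob_le_one (μ := Q x) (s := A)
      calc q x ≤ (1 : ENNReal).toReal := ENNReal.toReal_mono ENNReal.one_ne_top h
        _ = 1 := by simp
    set c := (M₁ A).toReal with hc_def
    have hc0 : 0 ≤ c := ENNReal.toReal_nonneg
    have hqc : ∀ x, |q x - c| ≤ (a - 1) * c := by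
      intro x
      obtain ⟨hx1, hx2⟩ := hmix μ₁ hpμ₁ x A hA
      have h1 : q x ≤ a * c := by
        have hfin : ENNReal.ofReal a * M₁ A ≠ ⊤ :=
          ENNReal.mul_ne_top ENNReal.ofReal_ne_top (measure_ne_top _ _)
        have := ENNReal.toReal_mono hfin hx1
        rwa [ENNReal.toReal_mul, ENNReal.toReal_ofReal ha0.le] at this
      have h2 : c ≤ a * q x := by
        have hfin : ENNReal.ofReal a * Q x A ≠ ⊤ :=
          ENNReal.mul_ne_top ENNReal.ofReal_ne_top (measure_ne_top _ _)
        have := ENNReal.toReal_mono hfin hx2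
        rwa [ENNReal.toReal_mul, ENNReal.toReal_ofReal ha0.le] at this
      rw [abs_le]
      constructor
      · nlinarith [hq0 x, mul_nonneg hc0 (sq_nonneg (a - 1))]
      · nlinarith [hq0 x]
    have hM0r : (M₀ A).toReal = ∫ x : ℝ, f₀ x * q x := hrep f₀ h₀_nonneg h₀_int A hA
    have hM1r : c = ∫ x : ℝ, f₁ x * q x := hrep f₁ h₁_nonneg h₁_int A hA
    have hsm0 : AEStronglyMeasurable (fun x : ℝ => f₀ x * q x) volume :=
      h₀_int.aestronglyMeasurable.mul hmq.aestronglyMeasurable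
    have hint0 : Integrable (fun x : ℝ => f₀ x * q x) := by
      apply Integrable.mono' h₀_int hsm0
      filter_upwards with x
      rw [Real.norm_eq_abs, abs_mul, abs_of_nonneg (h₀_nonneg x), abs_of_nonneg (hq0 x)]
      nlinarith [h₀_nonneg x, hq0 x, hq1 x]
    have hsm1 : AEStronglyMeasurable (fun x : ℝ => f₁ x * q x) volume :=
      h₁_int.aestronglyMeasurable.mul hmq.aestronglyMeasurable
    have hint1 : Integrable (fun x : ℝ => f₁ x * q x) := by
      apply Integrable.mono' h₁_int hsm1
      filter_upwards with x
      rw [Real.norm_eq_abs, abs_mul, abs_of_nonneg (h₁_nonneg x), abs_of_nonneg (hq0 x)]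
      nlinarith [h₁_nonneg x, hq0 x, hq1 x]
    have hintsub : Integrable (fun x : ℝ => (f₀ x - f₁ x) * q x) := by
      have : (fun x : ℝ => (f₀ x - f₁ x) * q x)
          = fun x => f₀ x * q x - f₁ x * q x := funext fun x => by ring
      rw [this]; exact hint0.sub hint1
    have hsmsh : AEStronglyMeasurable (fun x : ℝ => (f₀ x - f₁ x) * (q x - c)) volume :=
      (h₀_int.sub h₁_int).aestronglyMeasurable.mul
        ((hmq.sub measurable_const).aestronglyMeasurable)
    have hbnd_int : Integrable (fun x : ℝ => |f₀ x - f₁ x| * ((a - 1) * c)) :=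
      ((h₀_int.sub h₁_int).abs).mul_const ((a - 1) * c)
    have hintshift : Integrable (fun x : ℝ => (f₀ x - f₁ x) * (q x - c)) := by
      apply Integrable.mono' hbnd_int hsmsh
      filter_upwards with x
      rw [Real.norm_eq_abs, abs_mul]
      exact mul_le_mul_of_nonneg_left (hqc x) (abs_nonneg _)
    have hzero : ∫ x : ℝ, (f₀ x - f₁ x) = 0 := by
      rw [integral_sub h₀_int h₁_int, h₀_dens, h₁_dens]; ring
    have hdiff : (M₀ A).toReal - c = ∫ x : ℝ, (f₀ x - f₁ x) * (q x - c) := by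
      have e1 : (M₀ A).toReal - c = ∫ x : ℝ, (f₀ x - f₁ x) * q x := by
        rw [hM0r, hM1r, ← integral_sub hint0 hint1]
        congr 1; funext x; ring
      have e2 : (fun x : ℝ => (f₀ x - f₁ x) * q x)
          = fun x => (f₀ x - f₁ x) * (q x - c) + (f₀ x - f₁ x) * c := funext fun x => by ring
      have hc_int : Integrable (fun x : ℝ => (f₀ x - f₁ x) * c) :=
        (h₀_int.sub h₁_int).mul_const c
      rw [e1, e2, integral_add hintshift hc_int, integral_mul_const]
      have : ∫ x : ℝ, (f₀ x - f₁ x) = 0 := hzero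
      rw [this]; ring
    rw [hdiff]
    have habs : |∫ x : ℝ, (f₀ x - f₁ x) * (q x - c)|
        ≤ ∫ x : ℝ, |f₀ x - f₁ x| * |q x - c| := by
      simpa [Real.norm_eq_abs, abs_mul] using
        norm_integral_le_integral_norm (fun x : ℝ => (f₀ x - f₁ x) * (q x - c))
    have hintabs : Integrable (fun x : ℝ => |f₀ x - f₁ x| * |q x - c|) := by
      have := hintshift.abs
      simpa [abs_mul] using this
    have hmono : ∫ x : ℝ, |f₀ x - f₁ x| * |q x - c|
        ≤ ∫ x : ℝ, |f₀ x - f₁ x| * ((a - 1) * c) := by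
      apply integral_mono hintabs hbnd_int
      intro x
      exact mul_le_mul_of_nonneg_left (hqc x) (abs_nonneg _)
    have heval : ∫ x : ℝ, |f₀ x - f₁ x| * ((a - 1) * c) = ((a - 1) * T) * c := by
      rw [integral_mul_const]
      rw [hT_def]
      ring
    linarith [habs, hmono, heval.le, heval.ge]
  -- single-observation KL bound
  have hεnn : 0 ≤ (a - 1) * T := mul_nonneg (by linarith) hT0
  have hsingle : klDiv' M₀ M₁ ≤ ((a - 1) * T) ^ 2 :=
    kl_single_bound M₀ M₁ a ((a - 1) * T) ha hεnn h01 h10 hdist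
  -- tensorization
  have hIcc := rnDeriv_mem_Icc M₀ M₁ a ha h01 h10
  rw [klDiv'_pi M₀ M₁ hac a⁻¹ a (inv_pos.mpr ha0) (hac.ae_le hIcc)]
  calc (n : ℝ) * klDiv' M₀ M₁ ≤ (n : ℝ) * ((a - 1) * T) ^ 2 :=
      mul_le_mul_of_nonneg_left hsingle (Nat.cast_nonneg n)
    _ ≤ 4 * n * (a - 1) ^ 2 * T ^ 2 := by
        have hnn : (0 : ℝ) ≤ (n : ℝ) * ((a - 1) ^ 2 * T ^ 2) :=
          mul_nonneg (Nat.cast_nonneg n) (mul_nonneg (sq_nonneg _) (sq_nonneg _))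
        nlinarith [hnn]
end
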